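/- Define the order-k Lucas sequence by l(n) = trace(Qₖ^n) for n ≥ 0, where Qₖ is the k×k generalized Fibonacci companion matrix. Then the initial values are l(0) = k and l(r) = 2^r - 1 for 1 ≤ r ≤ k-1. -/

import Mathlib

def Qgen (k : ℕ) : Matrix (Fin k) (Fin k) ℤ :=
  fun i j => if (i : ℕ) = 0 then 1 else if (i : ℕ) = (j : ℕ) + 1 then 1 else 0

def Pgen (k r : ℕ) : Matrix (Fin k) (Fin k) ℤ :=
  fun i j => if (i : ℕ) < r then
      2 ^ (r - (i : ℕ) - 1) - (if (j : ℕ) + r ≤ k + (i : ℕ) then 0 else 2 ^ (r - (i : ℕ) + (j : ℕ) - k - 1))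
    else if (j : ℕ) + r = (i : ℕ) then 1 else 0

lemma mul_Q (k : ℕ) (hk : 0 < k) (M : Matrix (Fin k) (Fin k) ℤ) (i j : Fin k) :
    (M * Qgen k) i j = M i ⟨0, hk⟩ +
      (if h : (j : ℕ) + 1 < k then M i ⟨(j : ℕ) + 1, h⟩ else 0) := by
  rw [Matrix.mul_apply]
  have key : ∀ x : Fin k, M i x * Qgen k x j =
      (if x = ⟨0, hk⟩ then M i x else 0) +
      (if h : (j : ℕ) + 1 < k then (if x = ⟨(j : ℕ) + 1, h⟩ then M i x else 0) else 0) := by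
    intro x
    unfold Qgen
    by_cases hj : (j : ℕ) + 1 < k
    · simp only [hj, dite_true]
      split_ifs with h1 h2 h3 h4 h5 <;>
        simp_all [Fin.ext_iff] <;> omega
    · simp only [hj, dite_false]
      split_ifs with h1 h2 h3 <;> simp_all [Fin.ext_iff] <;> omega
  rw [Finset.sum_congr rfl (fun x _ => key x)]
  rw [Finset.sum_add_distrib]
  congr 1
  · rw [Finset.sum_ite_eq' Finset.univ]
    simp
  · by_cases hj : (j : ℕ) + 1 < k
    · simp only [hj, dite_true]
      rw [Finset.sum_ite_eq' Finset.univ]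
      simp
    · simp [hj]

lemma step (k n : ℕ) (hk : 2 ≤ k) (h1 : 1 ≤ n) (h2 : n + 1 ≤ k - 1) :
    Pgen k n * Qgen k = Pgen k (n + 1) := by
  have hk0 : 0 < k := by omega
  have hpow : ∀ a : ℕ, (2:ℤ) ^ (a + 1) = 2 ^ a + 2 ^ a := by
    intro a; rw [pow_succ]; ring
  ext i j
  rw [mul_Q k hk0]
  have hi := i.isLt
  have hj := j.isLt
  by_cases hjk : (j : ℕ) + 1 < k
  · simp only [hjk, dite_true]
    unfold Pgen
    simp only [Fin.val_mk]
    split_ifs <;> try omega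
    all_goals first
    | (have e1 : n + 1 - (i:ℕ) - 1 = 0 := by omega
       rw [e1]; norm_num)
    | (have e1 : n + 1 - (i:ℕ) - 1 = (n - (i:ℕ) - 1) + 1 := by omega
       have e2 : n + 1 - (i:ℕ) + (j:ℕ) - k - 1 = n - (i:ℕ) - 1 := by omega
       rw [e1, e2, hpow]; ring)
    | (have e1 : n + 1 - (i:ℕ) - 1 = (n - (i:ℕ) - 1) + 1 := by omega
       have e2 : n + 1 - (i:ℕ) + (j:ℕ) - k - 1 = n - (i:ℕ) + ((j:ℕ) + 1) - k - 1 := by omega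
       rw [e1, e2, hpow]; ring)
    | (have e1 : n + 1 - (i:ℕ) - 1 = (n - (i:ℕ) - 1) + 1 := by omega
       rw [e1, hpow]; ring)
  · simp only [hjk, dite_false]
    unfold Pgen
    simp only [Fin.val_mk]
    split_ifs <;> try omega
    all_goals first
    | (have e1 : n + 1 - (i:ℕ) - 1 = 0 := by omega
       rw [e1]; norm_num)
    | (have e1 : n + 1 - (i:ℕ) - 1 = (n - (i:ℕ) - 1) + 1 := by omega
       have e2 : n + 1 - (i:ℕ) + (j:ℕ) - k - 1 = n - (i:ℕ) - 1 := by omega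
       rw [e1, e2, hpow]; ring)
    | (have e1 : n + 1 - (i:ℕ) - 1 = (n - (i:ℕ) - 1) + 1 := by omega
       have e2 : n + 1 - (i:ℕ) + (j:ℕ) - k - 1 = n - (i:ℕ) + ((j:ℕ) + 1) - k - 1 := by omega
       rw [e1, e2, hpow]; ring)
    | (have e1 : n + 1 - (i:ℕ) - 1 = (n - (i:ℕ) - 1) + 1 := by omega
       rw [e1, hpow]; ring)

lemma pow_eq (k : ℕ) (hk : 2 ≤ k) :
    ∀ r : ℕ, 1 ≤ r → r ≤ k - 1 → Qgen k ^ r = Pgen k r := by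
  intro r
  induction r with
  | zero => intro h; omega
  | succ n ih =>
    intro _ hle
    rcases Nat.eq_zero_or_pos n with hn | hn
    · subst hn
      rw [pow_one]
      ext i j
      unfold Qgen Pgen
      split_ifs <;>
        first
        | rfl
        | (exfalso; omega)
        | (have e : 1 - (i:ℕ) - 1 = 0 := by omega
           rw [e]; norm_num)
    · rw [pow_succ, ih hn (by omega), step k n hk hn hle]

lemma geom2 (n : ℕ) : ∑ i ∈ Finset.range n, (2:ℤ) ^ i = 2 ^ n - 1 := by
  induction n with
  | zero => simp
  | succ n ih => rw [Finset.sum_range_succ, ih]; ring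

lemma trace_P (k r : ℕ) (hk : 2 ≤ k) (h1 : 1 ≤ r) (h2 : r ≤ k - 1) :
    (Pgen k r).trace = 2 ^ r - 1 := by
  have hd : ∀ i : Fin k, Pgen k r i i = if (i : ℕ) < r then 2 ^ (r - (i : ℕ) - 1) else 0 := by
    intro i
    unfold Pgen
    split_ifs <;> first | (exfalso; omega) | ring
  unfold Matrix.trace Matrix.diag
  rw [Finset.sum_congr rfl (fun i _ => hd i)]
  rw [Fin.sum_univ_eq_sum_range (fun n => if n < r then (2:ℤ) ^ (r - n - 1) else 0) k]
  have hsub : ∑ n ∈ Finset.range k, (if n < r then (2:ℤ) ^ (r - n - 1) else 0)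
      = ∑ n ∈ Finset.range r, (2:ℤ) ^ (r - n - 1) := by
    rw [← Finset.sum_subset (Finset.range_subset_range.mpr (by omega : r ≤ k))]
    · exact Finset.sum_congr rfl (fun n hn => by
        rw [if_pos (Finset.mem_range.mp hn)])
    · intro x _ hx
      rw [if_neg (by simpa using hx)]
  rw [hsub]
  have hrefl := Finset.sum_range_reflect (fun n => (2:ℤ) ^ n) r
  rw [← geom2 r, ← hrefl]
  exact Finset.sum_congr rfl (fun n hn => by
    congr 1
    have := Finset.mem_range.mp hn
    omega)

theorem lucas_initial_values (k : ℕ) (hk : 2 ≤ k) :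
    ((Qgen k) ^ 0).trace = (k : ℤ) ∧
    ∀ r : ℕ, 1 ≤ r → r ≤ k - 1 → ((Qgen k) ^ r).trace = 2 ^ r - 1 := by
  constructor
  · rw [pow_zero, Matrix.trace_one]
    simp
  · intro r h1 h2
    rw [pow_eq k hk r h1 h2, trace_P k r hk h1 h2]
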